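/- arXiv:2111.06648 — 3 statements merged into one kernel-verified Lean document; each statement's English description precedes it below -/
import Mathlib

section
/- No strict local maximum for the total population in the no-mutation model: if ρ : [0,∞) → (0,∞) is C² and satisfies (ε/2) ρ̈(t) = −(ρ̇(t)/(2ρ(t)²)) I(t) + (1/ε) S(t), where I(t) ≥ 0 and S(t) ≥ 0 for all t, then at any critical point (ρ̇(t₀) = 0) one has ρ̈(t₀) ≥ 0; consequently ρ has no strict local maximum and, being bounded, is either monotone or decreasing-then-increasing, hence converges as t → ∞. -/
/-- no strict local maximum for the total population in the
no-mutation model, and convergence at infinity. -/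
theorem stmt11 (ε : ℝ) (hε : 0 < ε) (ρ ρ' ρ'' I S : ℝ → ℝ)
    (hd1 : ∀ t, HasDerivAt ρ (ρ' t) t)
    (hd2 : ∀ t, HasDerivAt ρ' (ρ'' t) t)
    (hpos : ∀ t, 0 < ρ t) (hbdd : ∃ M, ∀ t, ρ t ≤ M)
    (hI : ∀ t, 0 ≤ I t) (hS : ∀ t, 0 ≤ S t)
    (heq : ∀ t, (ε / 2) * ρ'' t
      = -(ρ' t / (2 * (ρ t)^2)) * I t + (1 / ε) * S t) :
    (∀ t₀, ρ' t₀ = 0 → 0 ≤ ρ'' t₀)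
    ∧ ∃ L : ℝ, Filter.Tendsto ρ Filter.atTop (nhds L) := by
  -- key: wherever ρ' ≤ 0, ρ'' ≥ 0
  have key : ∀ t, ρ' t ≤ 0 → 0 ≤ ρ'' t := by
    intro t ht
    have h1 : 0 ≤ -(ρ' t / (2 * (ρ t)^2)) := by
      have hρ := hpos t
      have : ρ' t / (2 * (ρ t)^2) ≤ 0 :=
        div_nonpos_iff.mpr (Or.inr ⟨ht, by positivity⟩)
      linarith
    have h2 : 0 ≤ (ε / 2) * ρ'' t := by
      rw [heq t]
      have := mul_nonneg h1 (hI t)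
      have := mul_nonneg (le_of_lt (by positivity : (0:ℝ) < 1 / ε)) (hS t)
      linarith
    nlinarith
  have hcont' : Continuous ρ' :=
    continuous_iff_continuousAt.mpr fun t => (hd2 t).continuousAt
  constructor
  · intro t₀ h0
    exact key t₀ (le_of_eq h0)
  -- claim: once ρ' ≥ 0, stays ≥ 0
  have claim : ∀ t₁, 0 ≤ ρ' t₁ → ∀ t₂, t₁ ≤ t₂ → 0 ≤ ρ' t₂ := by
    intro t₁ h1 t₂ h12
    by_contra hneg
    push_neg at hneg
    set A : Set ℝ := Set.Icc t₁ t₂ ∩ {t | 0 ≤ ρ' t} with hA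
    have hAne : A.Nonempty := ⟨t₁, ⟨le_refl _, h12⟩, h1⟩
    have hAbdd : BddAbove A := ⟨t₂, fun x hx => hx.1.2⟩
    have hAclosed : IsClosed A :=
      isClosed_Icc.inter (isClosed_le continuous_const hcont')
    set s := sSup A with hs
    have hsA : s ∈ A := hAclosed.csSup_mem hAne hAbdd
    have hst₂ : s ≤ t₂ := hsA.1.2
    have hslt : s < t₂ :=
      lt_of_le_of_ne hst₂ fun h => absurd (h ▸ hsA.2) (not_le.mpr hneg)
    have hIoo : ∀ x ∈ Set.Ioo s t₂, ρ' x < 0 := by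
      intro x hx
      by_contra hc
      push_neg at hc
      have hxA : x ∈ A := ⟨⟨le_trans hsA.1.1 hx.1.le, hx.2.le⟩, hc⟩
      exact absurd (le_csSup hAbdd hxA) (not_le.mpr hx.1)
    have hmono : MonotoneOn ρ' (Set.Icc s t₂) := by
      apply monotoneOn_of_deriv_nonneg (convex_Icc s t₂) hcont'.continuousOn
      · intro x _
        exact (hd2 x).differentiableAt.differentiableWithinAt
      · intro x hx
        rw [interior_Icc] at hx
        rw [(hd2 x).deriv]
        exact key x (hIoo x hx).le
    have hle := hmono ⟨le_refl s, hst₂⟩ ⟨hst₂, le_refl t₂⟩ hst₂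
    have h0s : 0 ≤ ρ' s := hsA.2
    linarith
  obtain ⟨M, hM⟩ := hbdd
  by_cases hex : ∃ t₁, 0 ≤ ρ' t₁
  · obtain ⟨t₁, h1⟩ := hex
    have hmono : MonotoneOn ρ (Set.Ici t₁) := by
      apply monotoneOn_of_deriv_nonneg (convex_Ici t₁)
        (Continuous.continuousOn
          (continuous_iff_continuousAt.mpr fun t => (hd1 t).continuousAt))
      · intro x _
        exact (hd1 x).differentiableAt.differentiableWithinAt
      · intro x hx
        rw [interior_Ici] at hx
        rw [(hd1 x).deriv]
        exact claim t₁ h1 x hx.le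
    set g : ℝ → ℝ := fun t => ρ (max t t₁) with hg
    have hgmono : Monotone g := fun a b hab =>
      hmono (Set.mem_Ici.mpr (le_max_right a t₁)) (Set.mem_Ici.mpr (le_max_right b t₁))
        (max_le_max hab (le_refl t₁))
    have hgbdd : BddAbove (Set.range g) := ⟨M, by rintro _ ⟨t, rfl⟩; exact hM _⟩
    refine ⟨⨆ t, g t, Filter.Tendsto.congr' ?_ (tendsto_atTop_ciSup hgmono hgbdd)⟩
    filter_upwards [Filter.eventually_ge_atTop t₁] with t ht
    simp [hg, max_eq_left ht]
  · push_neg at hex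
    have hanti : Antitone ρ := by
      apply antitone_of_deriv_nonpos (fun t => (hd1 t).differentiableAt)
      intro x
      rw [(hd1 x).deriv]
      exact (hex x).le
    have hbdd' : BddBelow (Set.range ρ) := ⟨0, by rintro _ ⟨t, rfl⟩; exact (hpos t).le⟩
    exact ⟨⨅ t, ρ t, tendsto_atTop_ciInf hanti hbdd'⟩
end

section
/- Necessary condition for Dirac-mass local maximizers: under the assumptions of strict convexity of J(q) = (1/2)∬K_S q q − ∫R_0 q on probability measures, if δ_x is a local maximizer of J then the function y ↦ K_S(x,y) − R_0(y) attains its maximum over ℝ at y = x. (First-order optimality: for every probability measure h₀, ∫ (K_S(x,y) − R_0(y)) dh₀(y) ≤ K_S(x,x) − R_0(x).) -/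
open MeasureTheory

lemma dirac_integrable (f : ℝ → ℝ) (y : ℝ) : Integrable f (Measure.dirac y) :=
  (integrable_const (f y)).congr (MeasureTheory.ae_eq_dirac f).symm

/-- Integral against a convex combination `(1-θ)δ_x + θν`. -/
lemma int_comb (x θ : ℝ) (hθ0 : 0 ≤ θ) (hθ1 : θ ≤ 1)
    (ν : Measure ℝ) (f : ℝ → ℝ) (hfν : Integrable f ν) :
    ∫ z, f z ∂(ENNReal.ofReal (1 - θ) • Measure.dirac x + ENNReal.ofReal θ • ν)
      = (1 - θ) * f x + θ * ∫ z, f z ∂ν := by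
  have h1 : Integrable f (ENNReal.ofReal (1 - θ) • Measure.dirac x) :=
    (dirac_integrable f x).smul_measure ENNReal.ofReal_ne_top
  have h2 : Integrable f (ENNReal.ofReal θ • ν) :=
    hfν.smul_measure ENNReal.ofReal_ne_top
  rw [integral_add_measure h1 h2, integral_smul_measure, integral_smul_measure,
    integral_dirac, ENNReal.toReal_ofReal (by linarith), ENNReal.toReal_ofReal hθ0]
  simp [smul_eq_mul]

/-- `J(μ) = (1/2)∬ K dμ dμ - ∫ R₀ dμ` on measures. -/
noncomputable def Jmeas (K : ℝ → ℝ → ℝ) (R0 : ℝ → ℝ) (μ : Measure ℝ) : ℝ :=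
  (1/2) * (∫ x, ∫ y, K x y ∂μ ∂μ) - ∫ x, R0 x ∂μ

/-- if `δ_x` is a local maximizer of `J` then
`y ↦ K(x,y) - R₀(y)` attains its maximum at `x`, and the first-order
optimality condition holds. -/
theorem stmt13 (K : ℝ → ℝ → ℝ) (R0 : ℝ → ℝ)
    (hKc : Continuous fun p : ℝ × ℝ => K p.1 p.2)
    (hKb : ∃ M, ∀ x y, |K x y| ≤ M)
    (hKsym : ∀ x y, K x y = K y x)
    (hR0c : Continuous R0) (hR0 : ∀ y, 0 ≤ R0 y)
    (x : ℝ)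
    (hlocmax : ∀ ν : Measure ℝ, IsProbabilityMeasure ν → Integrable R0 ν →
      ∃ ε ∈ Set.Ioc (0:ℝ) 1, ∀ θ ∈ Set.Icc (0:ℝ) ε,
        Jmeas K R0 (ENNReal.ofReal (1 - θ) • Measure.dirac x + ENNReal.ofReal θ • ν)
          ≤ Jmeas K R0 (Measure.dirac x)) :
    (∀ y, K x y - R0 y ≤ K x x - R0 x)
    ∧ (∀ ν : Measure ℝ, IsProbabilityMeasure ν → Integrable R0 ν →
        Integrable (fun y => K x y) ν →
        (∫ y, (K x y - R0 y) ∂ν) ≤ K x x - R0 x) := by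
  obtain ⟨M, hM⟩ := hKb
  have hKm : StronglyMeasurable (fun p : ℝ × ℝ => K p.1 p.2) := hKc.stronglyMeasurable
  -- part 2 first
  have key : ∀ ν : Measure ℝ, IsProbabilityMeasure ν → Integrable R0 ν →
      Integrable (fun y => K x y) ν →
      (∫ y, (K x y - R0 y) ∂ν) ≤ K x x - R0 x := by
    intro ν hν hR0ν hKν
    obtain ⟨ε, ⟨hε0, hε1⟩, hloc⟩ := hlocmax ν hν hR0ν
    -- integrability of slices of K wrt ν
    have hslice : ∀ x' : ℝ, Integrable (fun y => K x' y) ν := by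
      intro x'
      refine Integrable.mono' (integrable_const M) ?_ ?_
      · exact ((hKc.comp (Continuous.prodMk_right x')).aestronglyMeasurable)
      · exact Filter.Eventually.of_forall fun y => by
          simpa using hM x' y
    have hcol : Integrable (fun y => K y x) ν := by
      have : (fun y => K y x) = fun y => K x y := funext fun y => hKsym y x
      rw [this]; exact hslice x
    -- the function x' ↦ ∫ K x' y dν is strongly measurable and bounded
    have hIm : StronglyMeasurable (fun x' => ∫ y, K x' y ∂ν) :=
      hKm.integral_prod_right'
    have hIb : ∀ x', |∫ y, K x' y ∂ν| ≤ M := by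
      intro x'
      calc |∫ y, K x' y ∂ν| ≤ ∫ y, |K x' y| ∂ν := by
            simpa using norm_integral_le_integral_norm (μ := ν) (fun y => K x' y)
        _ ≤ ∫ _, M ∂ν := by
            refine integral_mono (hslice x').abs (integrable_const M) fun y => hM x' y
        _ = M := by simp
    have hIν : Integrable (fun x' => ∫ y, K x' y ∂ν) ν :=
      Integrable.mono' (integrable_const M) hIm.aestronglyMeasurable
        (Filter.Eventually.of_forall fun x' => by simpa using hIb x')
    set CK := ∫ y, K x y ∂ν with hCK
    set B := ∫ x', ∫ y, K x' y ∂ν ∂ν with hB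
    set Rν := ∫ y, R0 y ∂ν with hRν
    -- J at dirac
    have hJd : Jmeas K R0 (Measure.dirac x) = (1/2) * K x x - R0 x := by
      simp [Jmeas, integral_dirac]
    -- J at the combination
    have hJcomb : ∀ θ : ℝ, 0 ≤ θ → θ ≤ 1 →
        Jmeas K R0 (ENNReal.ofReal (1 - θ) • Measure.dirac x + ENNReal.ofReal θ • ν)
          = (1/2) * ((1-θ) * ((1-θ) * K x x + θ * CK)
              + θ * ((1-θ) * CK + θ * B))
            - ((1-θ) * R0 x + θ * Rν) := by
      intro θ hθ0 hθ1
      set μθ := ENNReal.ofReal (1 - θ) • Measure.dirac x + ENNReal.ofReal θ • ν with hμθ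
      have hinner : (fun x' => ∫ y, K x' y ∂μθ)
          = fun x' => (1-θ) * K x' x + θ * ∫ y, K x' y ∂ν := by
        funext x'
        exact int_comb x θ hθ0 hθ1 ν (fun y => K x' y) (hslice x')
      have hg : Integrable (fun x' => (1-θ) * K x' x + θ * ∫ y, K x' y ∂ν) ν :=
        (hcol.const_mul _).add (hIν.const_mul _)
      have houter : ∫ x', ∫ y, K x' y ∂μθ ∂μθ
          = (1-θ) * ((1-θ) * K x x + θ * CK)
            + θ * ((1-θ) * (∫ y, K y x ∂ν) + θ * B) := by
        rw [hinner, int_comb x θ hθ0 hθ1 ν _ hg]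
        rw [integral_add (hcol.const_mul _) (hIν.const_mul _),
          integral_const_mul, integral_const_mul]
      have hsym : (∫ y, K y x ∂ν) = CK := by
        rw [hCK]; exact integral_congr_ae (Filter.Eventually.of_forall fun y => hKsym y x)
      have hRint : ∫ y, R0 y ∂μθ = (1-θ) * R0 x + θ * Rν :=
        int_comb x θ hθ0 hθ1 ν R0 hR0ν
      rw [Jmeas, houter, hsym, hRint]
    -- the first order quantity
    set c := CK - Rν - (K x x - R0 x) with hc
    set d := K x x / 2 - CK + B / 2 with hd
    have hineq : ∀ θ : ℝ, 0 < θ → θ ≤ ε → c ≤ θ * (-d) := by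
      intro θ hθ0 hθε
      have hθ1 : θ ≤ 1 := hθε.trans hε1
      have := hloc θ ⟨le_of_lt hθ0, hθε⟩
      rw [hJcomb θ (le_of_lt hθ0) hθ1, hJd] at this
      have hexp : θ * c + θ^2 * d ≤ 0 := by
        rw [hc, hd]; nlinarith [this]
      nlinarith [hexp, hθ0]
    have hc0 : c ≤ 0 := by
      rcases le_or_gt c 0 with h | h
      · exact h
      · exfalso
        set θ := min ε (c / (2 * (|d| + 1))) with hθ
        have habs : 0 ≤ |d| := abs_nonneg d
        have hθpos : 0 < θ := lt_min hε0 (by positivity)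
        have hθε : θ ≤ ε := min_le_left _ _
        have h1 := hineq θ hθpos hθε
        have h2 : θ * (-d) ≤ θ * |d| := by
          have : -d ≤ |d| := neg_le_abs d
          nlinarith
        have h3 : θ ≤ c / (2 * (|d| + 1)) := min_le_right _ _
        have h4 : θ * |d| ≤ (c / (2 * (|d| + 1))) * |d| := by nlinarith
        have h5 : (c / (2 * (|d| + 1))) * |d| < c := by
          rw [div_mul_eq_mul_div, div_lt_iff₀ (by positivity)]
          nlinarith
        linarith
    have : (∫ y, (K x y - R0 y) ∂ν) = CK - Rν := integral_sub hKν hR0ν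
    rw [this]; rw [hc] at hc0; linarith
  refine ⟨fun y => ?_, key⟩
  have := key (Measure.dirac y) (by infer_instance) (dirac_integrable R0 y)
    (dirac_integrable (fun z => K x z) y)
  rwa [integral_dirac] at this
end

section
/- An Evolutionary Stable Distribution for the no-mutation model cannot be polymorphic when the kernel is radially decreasing: let K₀ : ℝ → (0,∞) be even, differentiable, with K₀'(z) < 0 for z > 0. Suppose n̄ = Σ_{i=1}^k ρ_i δ_{x_i} with k ≥ 2, distinct points x₁ < x₂ < ... < x_k, all ρ_i > 0, and suppose K̄(x) := (K₀ ∗ n̄)(x) = Σ ρ_i K₀(x − x_i) attains its maximum over ℝ at each x_i. Then a contradiction follows; specifically K̄'(x₁) = Σ_{i≥2} ρ_i K₀'(x₁ − x_i) > 0, contradicting that x₁ is a maximum point of K̄. -/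
/-- an ESD for the no-mutation model with a radially decreasing
kernel cannot be polymorphic (a sum of `k ≥ 2` Dirac masses whose convolution
is maximal at each atom yields a contradiction). -/
theorem stmt14 (K₀ K₀' : ℝ → ℝ) (hpos : ∀ z, 0 < K₀ z)
    (heven : ∀ z, K₀ (-z) = K₀ z)
    (hd : ∀ z, HasDerivAt K₀ (K₀' z) z)
    (hdec : ∀ z, 0 < z → K₀' z < 0)
    (k : ℕ) (hk : 2 ≤ k) (x : Fin k → ℝ) (hx : StrictMono x)
    (ρw : Fin k → ℝ) (hρ : ∀ i, 0 < ρw i)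
    (hmax : ∀ i : Fin k, ∀ y : ℝ,
      (∑ j, ρw j * K₀ (y - x j)) ≤ ∑ j, ρw j * K₀ (x i - x j)) :
    False := by
  -- K₀' is odd
  have hodd : ∀ z, K₀' (-z) = -K₀' z := by
    intro z
    have h1 : HasDerivAt (fun w => K₀ (-w)) (K₀' (-z) * (-1)) z :=
      (hd (-z)).comp z (hasDerivAt_neg z)
    have h2 : HasDerivAt (fun w => K₀ (-w)) (K₀' z) z := by
      have : (fun w => K₀ (-w)) = K₀ := funext heven
      rw [this]; exact hd z
    have := h1.unique h2
    linarith
  -- derivative of the convolution at any point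
  have hf : ∀ y : ℝ, HasDerivAt (fun y => ∑ j, ρw j * K₀ (y - x j))
      (∑ j, ρw j * K₀' (y - x j)) y := by
    intro y
    apply HasDerivAt.fun_sum
    intro j _
    have h1 : HasDerivAt (fun y => K₀ (y - x j)) (K₀' (y - x j) * 1) y :=
      (hd (y - x j)).comp y ((hasDerivAt_id y).sub_const (x j))
    simpa using h1.const_mul (ρw j)
  -- x 0 is a global max, so derivative there is zero
  let i0 : Fin k := ⟨0, by omega⟩
  let i1 : Fin k := ⟨1, by omega⟩
  have hlt : x i0 < x i1 := hx (by simp [i0, i1, Fin.lt_def])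
  have hzero : (∑ j, ρw j * K₀' (x i0 - x j)) = 0 := by
    have hmax' : IsLocalMax (fun y => ∑ j, ρw j * K₀ (y - x j)) (x i0) :=
      Filter.Eventually.of_forall (hmax i0)
    exact hmax'.hasDerivAt_eq_zero (hf (x i0))
  -- but every term is nonneg and the i1 term is positive
  have hterm : ∀ j, 0 ≤ ρw j * K₀' (x i0 - x j) := by
    intro j
    rcases lt_trichotomy (x i0) (x j) with h | h | h
    · have : K₀' (x i0 - x j) = -K₀' (x j - x i0) := by
        rw [← hodd]; ring_nf
      rw [this]
      have := hdec (x j - x i0) (by linarith)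
      nlinarith [hρ j]
    · have h0 : K₀' 0 = 0 := by
        have := hodd 0; simp at this; linarith
      simp [h, h0]
    · have := hdec (x i0 - x j) (by linarith)
      exfalso
      have : x j < x i0 := h
      have hle : i0 ≤ j := by
        simp [i0, Fin.le_def]
      exact absurd (hx.monotone hle) (not_le.mpr h)
  have hpos1 : 0 < ρw i1 * K₀' (x i0 - x i1) := by
    have : K₀' (x i0 - x i1) = -K₀' (x i1 - x i0) := by
      rw [← hodd]; ring_nf
    rw [this]
    have := hdec (x i1 - x i0) (by linarith)
    nlinarith [hρ i1]
  have : 0 < ∑ j, ρw j * K₀' (x i0 - x j) :=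
    Finset.sum_pos' (fun j _ => hterm j) ⟨i1, Finset.mem_univ _, hpos1⟩
  linarith
end
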